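/- Let p ≥ 1 and q be integers with p² + 4q > 0 and p² + 2q − 2 < p·√(p² + 4q), set α = (p + √(p² + 4q))/2, β = (p − √(p² + 4q))/2, let a, b be integers with c₁ = (b − aβ)/(α − β) > 0, and define Wₙ = c₁αⁿ − c₂βⁿ where c₂ = (b − aα)/(α − β). Let m, t ≥ 1 be integers. Then lim_{n→∞} [ (Σ_{k=n}^{∞} (−1)^k/(Σ_{i=0}^{t} W_{mk+i}))^{−1} − ((−1)^n/(α − 1))·(W_{mn+t+1} − W_{mn} + W_{m(n−1)+t+1} − W_{m(n−1)}) ] = 0. -/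

import Mathlib

/-!
The window sums `S j = ∑_{i ≤ t} W (m j + i)` have the form `c xʲ - d yʲ` with `x = αᵐ > 1`,
`|y| = |β|ᵐ < 1`. The alternating tail of `(-1)ᵏ / (c xᵏ)` is geometric, and the inverse of its
sum is `(-1)ⁿ c (1 + x⁻¹) xⁿ`, which is the claimed main term. The error `1 / S j - 1 / (c xʲ)`
is `O((y / x²)ʲ)`, hence so is the tail of the errors, and inverting the tail sum multiplies
this by the square of the main term, `O(x²ⁿ)`, leaving `O(yⁿ) → 0`.

When `α = 1` (`p = 1`, `q = 0`) the terms of the series do not tend to `0`, so its `tsum` is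
the junk value `0`, and so is the division by `α - 1 = 0`.
-/

open Filter Asymptotics Topology Finset

theorem Asymptotics.IsBigO.inv_sub_inv {α 𝕜 : Type*} [NormedField 𝕜] {l : Filter α}
    {u v e : α → 𝕜} (h : (u - v) =O[l] e) (he : e =o[l] v) :
    (fun a => (u a)⁻¹ - (v a)⁻¹) =O[l] (fun a => e a / v a ^ 2) := by
  have huv : u ~[l] v := h.trans_isLittleO he
  -- `u ~ v` makes `u` and `v` vanish together eventually, which is what the identity needs.
  have hid : (fun a => (v a - u a) * (u a)⁻¹ * (v a)⁻¹) =ᶠ[l] fun a => (u a)⁻¹ - (v a)⁻¹ := by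
    filter_upwards [huv.isBigO.eq_zero_imp, huv.symm.isBigO.eq_zero_imp] with a hu_of_hv hv_of_hu
    by_cases hv : v a = 0
    · simp [hv, hu_of_hv hv]
    · have hu : u a ≠ 0 := fun hu => hv (hv_of_hu hu)
      field_simp
  have hprod := (h.neg_left.mul huv.inv.isBigO).mul (isBigO_refl (fun a => (v a)⁻¹) l)
  refine hprod.congr' ?_ ?_
  · filter_upwards [hid] with a ha
    rw [← ha]
    simp
  · filter_upwards with a
    simp [div_eq_mul_inv, pow_two, mul_assoc]

theorem Asymptotics.IsBigO.tsum_nat_add_of_geometric {E : Type*} [NormedAddCommGroup E]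
    {f : ℕ → E} {r : ℝ} (hr : |r| < 1) (hf : f =O[atTop] (r ^ ·)) :
    (fun n => ∑' k, f (n + k)) =O[atTop] (r ^ ·) := by
  obtain ⟨C, hC⟩ := hf.bound
  obtain ⟨N, hN⟩ := eventually_atTop.1 hC
  refine IsBigO.of_bound (C / (1 - |r|)) (eventually_atTop.2 ⟨N, fun n hn => ?_⟩)
  have hgeom : HasSum (fun k => C * |r| ^ n * |r| ^ k) (C * |r| ^ n * (1 - |r|)⁻¹) :=
    (hasSum_geometric_of_lt_one (abs_nonneg r) hr).mul_left _
  refine (tsum_of_norm_bounded hgeom fun k => ?_).trans_eq ?_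
  · simpa [pow_add, mul_assoc] using hN (n + k) (by omega)
  · rw [norm_pow, Real.norm_eq_abs]
    ring

theorem hasSum_neg_one_pow_div_mul_pow {𝕜 : Type*} [NormedField 𝕜] [CompleteSpace 𝕜]
    (c : 𝕜) {x : 𝕜} (hx : 1 < ‖x‖) (n : ℕ) :
    HasSum (fun k => (-1) ^ (n + k) / (c * x ^ (n + k))) ((-1) ^ n * c * (1 + x⁻¹) * x ^ n)⁻¹ := by
  have hx0 : x ≠ 0 := norm_pos_iff.1 (one_pos.trans hx)
  have hr : ‖-x⁻¹‖ < 1 := by simpa using inv_lt_one_of_one_lt₀ hx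
  have h1 : 1 + x⁻¹ ≠ 0 := by
    rw [← sub_neg_eq_add]
    exact sub_ne_zero.2 fun h => by simp [← h] at hr
  have hterm : (fun k => (-1) ^ (n + k) / (c * x ^ (n + k))) =
      fun k => (-1) ^ n * (c * x ^ n)⁻¹ * (-x⁻¹) ^ k := by
    ext k
    rw [neg_pow (x⁻¹), inv_pow, pow_add, pow_add]
    field_simp
  have hval : ((-1) ^ n * c * (1 + x⁻¹) * x ^ n)⁻¹ = (-1) ^ n * (c * x ^ n)⁻¹ * (1 - -x⁻¹)⁻¹ := by
    rw [sub_neg_eq_add]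
    field_simp
    simp [← pow_mul]
  rw [hterm, hval]
  exact (hasSum_geometric_of_norm_lt_one hr).mul_left _

section PerturbedGeometric

variable {c d x y : ℝ} {S : ℕ → ℝ}

theorem isBigO_inv_sub_inv_const_mul_pow (hc : c ≠ 0) (hyx : |y| < |x|)
    (hS : ∀ j, S j = c * x ^ j - d * y ^ j) :
    (fun j => (S j)⁻¹ - (c * x ^ j)⁻¹) =O[atTop] fun j => (y / x ^ 2) ^ j := by
  have hx0 : x ≠ 0 := abs_pos.1 ((abs_nonneg y).trans_lt hyx)
  have hdiff : (S - (c * x ^ ·)) =O[atTop] (y ^ ·) := by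
    refine (isBigO_const_mul_self (-d) _ _).congr_left fun j => ?_
    simp [hS]
  have hsmall : (y ^ ·) =o[atTop] (c * x ^ ·) :=
    (isLittleO_pow_pow_of_abs_lt_left hyx).trans_isBigO (isBigO_self_const_mul hc _ _)
  refine (hdiff.inv_sub_inv hsmall).trans
    ((isBigO_const_mul_self (c⁻¹ ^ 2) _ _).congr_left fun j => ?_)
  rw [div_pow, ← pow_mul, mul_comm 2 j, pow_mul]
  field_simp

theorem isBigO_tsum_neg_one_pow_div_sub (hc : c ≠ 0) (hx : 1 < x) (hyx : |y| < x)
    (hS : ∀ j, S j = c * x ^ j - d * y ^ j) :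
    (fun n => ∑' k, (-1) ^ (n + k) / S (n + k) - ((-1) ^ n * c * (1 + x⁻¹) * x ^ n)⁻¹)
      =O[atTop] fun n => (y / x ^ 2) ^ n := by
  have hx0 : 0 < x := one_pos.trans hx
  have hr : |y / x ^ 2| < 1 := by
    rw [abs_div, abs_of_pos (pow_pos hx0 2), div_lt_one (pow_pos hx0 2)]
    nlinarith
  have hE : (fun j => (-1) ^ j * ((S j)⁻¹ - (c * x ^ j)⁻¹)) =O[atTop] fun j => (y / x ^ 2) ^ j :=
    isBigO_norm_left.1 <| by
      simpa [norm_mul] using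
        (isBigO_inv_sub_inv_const_mul_pow hc (by rwa [abs_of_pos hx0]) hS).norm_left
  have hEsum := summable_of_isBigO_nat (summable_geometric_of_abs_lt_one hr) hE
  refine (hE.tsum_nat_add_of_geometric hr).congr_left fun n => ?_
  have hEn : Summable fun k => (-1) ^ (n + k) * ((S (n + k))⁻¹ - (c * x ^ (n + k))⁻¹) := by
    simpa only [add_comm _ n] using (summable_nat_add_iff n).2 hEsum
  have hmain := hasSum_neg_one_pow_div_mul_pow c (by rwa [Real.norm_of_nonneg hx0.le]) n
  rw [eq_sub_iff_add_eq', ← (hmain.add hEn.hasSum).tsum_eq]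
  congr 1
  ext k
  ring

theorem tendsto_inv_tsum_neg_one_pow_div_sub (hc : c ≠ 0) (hx : 1 < x) (hy : |y| < 1)
    (hS : ∀ j, S j = c * x ^ j - d * y ^ j) :
    Tendsto (fun n => (∑' k, (-1) ^ (n + k) / S (n + k))⁻¹ - (-1) ^ n * c * (1 + x⁻¹) * x ^ n)
      atTop (𝓝 0) := by
  have hx0 : 0 < x := one_pos.trans hx
  set M : ℕ → ℝ := fun n => (-1) ^ n * c * (1 + x⁻¹) * x ^ n with hM
  have htail := isBigO_tsum_neg_one_pow_div_sub hc hx (hy.trans hx) hS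
  have hK : (c * (1 + x⁻¹))⁻¹ ≠ 0 := by positivity
  have hsmall : (fun n => (y / x ^ 2) ^ n) =o[atTop] fun n => (M n)⁻¹ := by
    have hratio : |y / x ^ 2| < |-x⁻¹| := by
      rw [abs_div, abs_neg, abs_inv, abs_of_pos hx0, abs_of_pos (pow_pos hx0 2),
        div_lt_iff₀ (pow_pos hx0 2), inv_mul_eq_div, sq, mul_div_cancel_right₀ _ hx0.ne']
      exact hy.trans hx
    refine ((isLittleO_pow_pow_of_abs_lt_left hratio).trans_isBigO
      (isBigO_self_const_mul hK _ _)).congr_right fun n => ?_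
    rw [hM, neg_pow, inv_pow]
    field_simp
    rw [pow_right_comm (-1 : ℝ) n 2, neg_one_sq, one_pow]
  have hlim : Tendsto (fun n => (y / x ^ 2) ^ n / (M n)⁻¹ ^ 2) atTop (𝓝 0) := by
    have hy0 := (tendsto_pow_atTop_nhds_zero_of_abs_lt_one hy).const_mul ((c * (1 + x⁻¹)) ^ 2)
    rw [mul_zero] at hy0
    refine hy0.congr fun n => ?_
    rw [hM, div_pow, ← pow_mul]
    field_simp
    rw [pow_right_comm (-1 : ℝ) n 2, neg_one_sq, one_pow]
    ring
  simpa using (htail.inv_sub_inv hsmall).trans_tendsto hlim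

end PerturbedGeometric

theorem abs_sub_sqrt_div_two_lt_one {p q : ℝ} (hdisc : 0 ≤ p ^ 2 + 4 * q)
    (hcond : p ^ 2 + 2 * q - 2 < p * √(p ^ 2 + 4 * q)) : |(p - √(p ^ 2 + 4 * q)) / 2| < 1 := by
  have hsq := Real.sq_sqrt hdisc
  rw [abs_lt]
  constructor <;> nlinarith [Real.sqrt_nonneg (p ^ 2 + 4 * q)]

theorem one_le_add_sqrt_div_two {p q : ℤ} (hp : 1 ≤ p) (hdisc : 0 < (p : ℝ) ^ 2 + 4 * q) :
    1 ≤ ((p : ℝ) + √((p : ℝ) ^ 2 + 4 * q)) / 2 := by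
  have hdisc' : (1 : ℝ) ≤ (p : ℝ) ^ 2 + 4 * q := by
    exact_mod_cast (show (0 : ℤ) < p ^ 2 + 4 * q by exact_mod_cast hdisc)
  have hp' : (1 : ℝ) ≤ p := by exact_mod_cast hp
  have := Real.one_le_sqrt.2 hdisc'
  linarith

theorem tsum_neg_one_pow_div_eq_zero {S : ℕ → ℝ} {s : ℝ} (hS : Tendsto S atTop (𝓝 s)) (hs : s ≠ 0)
    (n : ℕ) : ∑' k, (-1) ^ (n + k) / S (n + k) = 0 := by
  refine tsum_eq_zero_of_not_summable fun hsum => ?_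
  have hsum' : Summable fun j => (-1 : ℝ) ^ j / S j :=
    (summable_nat_add_iff n).1 (by simpa only [add_comm _ n] using hsum)
  have h0 := hsum'.tendsto_atTop_zero.abs
  have hs' : Tendsto (fun j => |(-1) ^ j / S j|) atTop (𝓝 |s|⁻¹) := by
    refine (hS.abs.inv₀ (abs_ne_zero.2 hs)).congr fun j => ?_
    rw [abs_div, abs_pow, abs_neg, abs_one, one_pow, one_div]
  rw [abs_zero] at h0
  exact inv_ne_zero (abs_ne_zero.2 hs) (tendsto_nhds_unique hs' h0)

theorem sum_range_binet {R : Type*} [CommRing R] {W : ℤ → R} {c₁ c₂ α β : R}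
    (hW : ∀ j : ℕ, W j = c₁ * α ^ j - c₂ * β ^ j) (m t j : ℕ) :
    ∑ i ∈ range t, W (m * j + i) =
      c₁ * (∑ i ∈ range t, α ^ i) * (α ^ m) ^ j - c₂ * (∑ i ∈ range t, β ^ i) * (β ^ m) ^ j := by
  rw [mul_assoc, mul_assoc, sum_mul, sum_mul, mul_sum, mul_sum, ← sum_sub_distrib]
  refine sum_congr rfl fun i _ => ?_
  have := hW (m * j + i)
  push_cast at this
  rw [this, pow_add, pow_add, pow_mul, pow_mul]
  ring

theorem binet_sub_add_sub {R : Type*} [CommRing R] {W : ℤ → R} {c₁ c₂ α β : R}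
    (hW : ∀ j : ℕ, W j = c₁ * α ^ j - c₂ * β ^ j) (m t n : ℕ) :
    W (m * (n + 1) + t + 1) - W (m * (n + 1)) + W (m * n + t + 1) - W (m * n) =
      c₁ * (α ^ (t + 1) - 1) * ((α ^ m) ^ (n + 1) + (α ^ m) ^ n) -
        c₂ * (β ^ (t + 1) - 1) * ((β ^ m) ^ (n + 1) + (β ^ m) ^ n) := by
  have h₁ := hW (m * (n + 1) + t + 1)
  have h₂ := hW (m * (n + 1))
  have h₃ := hW (m * n + t + 1)
  have h₄ := hW (m * n)
  push_cast at h₁ h₂ h₃ h₄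
  rw [h₁, h₂, h₃, h₄]
  simp only [pow_add, pow_mul]
  ring

section BinetWindow

variable {W : ℤ → ℝ} {S : ℕ → ℝ} {c₁ c₂ α β : ℝ} {m t : ℕ}

theorem tsum_neg_one_pow_div_binet_window_eq_zero (hα : α = 1) (hβ : |β| < 1) (hc₁ : 0 < c₁)
    (hm : 1 ≤ m) (hW : ∀ j : ℕ, W j = c₁ * α ^ j - c₂ * β ^ j)
    (hS : ∀ j, S j = ∑ i ∈ range (t + 1), W (m * j + i)) (n : ℕ) :
    ∑' k, (-1) ^ (n + k) / S (n + k) = 0 := by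
  have hy : |β ^ m| < 1 := by
    rw [abs_pow]
    exact pow_lt_one₀ (abs_nonneg β) hβ (by omega)
  have hlim := tendsto_const_nhds (x := c₁ * (t + 1)) (f := atTop).sub
    ((tendsto_pow_atTop_nhds_zero_of_abs_lt_one hy).const_mul (c₂ * ∑ i ∈ range (t + 1), β ^ i))
  rw [mul_zero, sub_zero] at hlim
  refine tsum_neg_one_pow_div_eq_zero (hlim.congr fun j => ?_) (by positivity) n
  simp [hS, sum_range_binet hW, hα]

theorem tendsto_inv_tsum_binet_window_sub (hα : 1 < α) (hβ : |β| < 1) (hc₁ : 0 < c₁)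
    (hm : 1 ≤ m) (hW : ∀ j : ℕ, W j = c₁ * α ^ j - c₂ * β ^ j)
    (hS : ∀ j, S j = ∑ i ∈ range (t + 1), W (m * j + i)) :
    Tendsto (fun n : ℕ => (∑' k, (-1) ^ (n + k) / S (n + k))⁻¹ - ((-1) ^ n / (α - 1)) *
      (W (m * n + t + 1) - W (m * n) + W (m * ((n : ℤ) - 1) + t + 1) - W (m * ((n : ℤ) - 1))))
      atTop (𝓝 0) := by
  have hy : |β ^ m| < 1 := by
    rw [abs_pow]
    exact pow_lt_one₀ (abs_nonneg β) hβ (by omega)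
  have hA : 0 < c₁ * ∑ i ∈ range (t + 1), α ^ i :=
    mul_pos hc₁ (sum_pos (fun i _ => by positivity) nonempty_range_add_one)
  have hS' (j : ℕ) : S j = (c₁ * ∑ i ∈ range (t + 1), α ^ i) * (α ^ m) ^ j -
      (c₂ * ∑ i ∈ range (t + 1), β ^ i) * (β ^ m) ^ j := by
    rw [hS, sum_range_binet hW]
  rw [← tendsto_add_atTop_iff_nat 1]
  have hcore := (tendsto_inv_tsum_neg_one_pow_div_sub hA.ne' (one_lt_pow₀ hα (by omega)) hy
    hS').comp (tendsto_add_atTop_nat 1)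
  have hgeo := (tendsto_pow_atTop_nhds_zero_of_abs_lt_one (by rwa [abs_neg] : |-β ^ m| < 1))
    |>.const_mul (c₂ * (β ^ (t + 1) - 1) / (α - 1) * (1 + β ^ m))
  have hlim := hcore.sub hgeo
  rw [mul_zero, sub_zero] at hlim
  refine hlim.congr fun n => ?_
  push_cast
  rw [add_sub_cancel_right, binet_sub_add_sub hW m t n, Function.comp_apply,
    ← geom_sum_mul α (t + 1), neg_pow (β ^ m)]
  have hα1 : α - 1 ≠ 0 := sub_ne_zero.2 hα.ne'
  have hx0 : α ^ m ≠ 0 := by positivity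
  field_simp
  ring

end BinetWindow

theorem inverse_alternating_tail_sum_consecutive_general (p q : ℤ) (α β c₁ c₂ : ℝ)
    (hp : 1 ≤ p)
    (hdisc : 0 < (p : ℝ) ^ 2 + 4 * q)
    (hcond : (p : ℝ) ^ 2 + 2 * q - 2 < p * Real.sqrt ((p : ℝ) ^ 2 + 4 * q))
    (hα : α = ((p : ℝ) + Real.sqrt ((p : ℝ) ^ 2 + 4 * q)) / 2)
    (hβ : β = ((p : ℝ) - Real.sqrt ((p : ℝ) ^ 2 + 4 * q)) / 2)
    (hc₁pos : 0 < c₁)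
    (W : ℤ → ℝ) (hW : ∀ n : ℤ, W n = c₁ * α ^ n - c₂ * β ^ n)
    (m t : ℕ) (hm : 1 ≤ m) :
    Tendsto (fun n : ℕ =>
      (∑' k : ℕ, (-1 : ℝ) ^ (n + k) /
        (∑ i ∈ Finset.range (t + 1), W ((m : ℤ) * (n + k) + i)))⁻¹ -
      ((-1 : ℝ) ^ n / (α - 1)) *
        (W ((m : ℤ) * n + t + 1) - W ((m : ℤ) * n) +
          W ((m : ℤ) * ((n : ℤ) - 1) + t + 1) - W ((m : ℤ) * ((n : ℤ) - 1))))
      atTop (nhds 0) := by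
  have hβ1 : |β| < 1 := hβ ▸ abs_sub_sqrt_div_two_lt_one hdisc.le hcond
  have hWnat (j : ℕ) : W j = c₁ * α ^ j - c₂ * β ^ j := by simpa using hW j
  set S : ℕ → ℝ := fun j => ∑ i ∈ range (t + 1), W (m * j + i)
  have hT (n k : ℕ) : ∑ i ∈ range (t + 1), W (m * (n + k) + i) = S (n + k) := by simp [S]
  simp only [hT]
  rcases (hα ▸ one_le_add_sqrt_div_two hp hdisc : 1 ≤ α).eq_or_lt with hα1 | hα1
  · refine tendsto_const_nhds.congr fun n => ?_
    rw [tsum_neg_one_pow_div_binet_window_eq_zero hα1.symm hβ1 hc₁pos hm hWnat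
      (fun _ => rfl) n, ← hα1]
    simp
  · exact tendsto_inv_tsum_binet_window_sub hα1 hβ1 hc₁pos hm hWnat fun _ => rfl

/-- Corollary 4.3: the inverse of the alternating tail sum
`Σ_{k=n}^∞ (−1)^k/(Σ_{i=0}^t W_{mk+i})` is asymptotically
`((−1)^n/(α−1))·(W_{mn+t+1} − W_{mn} + W_{m(n−1)+t+1} − W_{m(n−1)})`. -/
theorem inverse_alternating_tail_sum_consecutive (p q a b : ℤ) (α β c₁ c₂ : ℝ)
    (hp : 1 ≤ p)
    (hdisc : 0 < (p : ℝ) ^ 2 + 4 * q)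
    (hcond : (p : ℝ) ^ 2 + 2 * q - 2 < p * Real.sqrt ((p : ℝ) ^ 2 + 4 * q))
    (hα : α = ((p : ℝ) + Real.sqrt ((p : ℝ) ^ 2 + 4 * q)) / 2)
    (hβ : β = ((p : ℝ) - Real.sqrt ((p : ℝ) ^ 2 + 4 * q)) / 2)
    (hc₁ : c₁ = ((b : ℝ) - a * β) / (α - β))
    (hc₂ : c₂ = ((b : ℝ) - a * α) / (α - β))
    (hc₁pos : 0 < c₁)
    (W : ℤ → ℝ) (hW : ∀ n : ℤ, W n = c₁ * α ^ n - c₂ * β ^ n)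
    (m t : ℕ) (hm : 1 ≤ m) (ht : 1 ≤ t) :
    Tendsto (fun n : ℕ =>
      (∑' k : ℕ, (-1 : ℝ) ^ (n + k) /
        (∑ i ∈ Finset.range (t + 1), W ((m : ℤ) * (n + k) + i)))⁻¹ -
      ((-1 : ℝ) ^ n / (α - 1)) *
        (W ((m : ℤ) * n + t + 1) - W ((m : ℤ) * n) +
          W ((m : ℤ) * ((n : ℤ) - 1) + t + 1) - W ((m : ℤ) * ((n : ℤ) - 1))))
      atTop (nhds 0) :=
  inverse_alternating_tail_sum_consecutive_general p q α β c₁ c₂ hp hdisc hcond hα hβ hc₁pos W hW m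
    t hm
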